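/- Let C be a q-ary (n,k,r,ρ) LRC code with distance d, N = r+ρ-1, and μ = ⌈(n-(d-1))/N⌉ + 1. Then k ≤ μ·(N - log_q(∑_{e=0}^{⌊(ρ-1)/2⌋} C(N,e)(q-1)^e)). -/

import Mathlib

/-!
Let `t = ⌊(ρ - 1) / 2⌋` and let `V(m)` be the volume of a Hamming ball of radius `t` in `m`
coordinates. Consider the codewords `D` that agree outside a set `S` of coordinates. If
`#S ≤ d - 1` there is at most one of them. Otherwise pick `i ∈ S` and put `A = R i ∩ S`: the
restrictions of `D` to `A` are `ρ`-separated, so by sphere packing there are at most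
`q ^ #A / V(#A) ≤ (q ^ N / V(N)) ^ (#A / N)` of them, the last step because `V` is log-concave,
whence `V(m) ^ (1 / m)` decreases. Every fibre of the restriction agrees outside `S \ A`, and
induction on `S` gives `#D ^ N * V(N) ^ (#S - (d - 1) + N) ≤ q ^ (N * (#S - (d - 1) + N))`.
For `S` the set of all coordinates, take logarithms.
-/

open Finset

/-- The volume of a Hamming ball of radius `t` in `m` coordinates over `x + 1` letters. -/
def hammingBallVol (x t m : ℕ) : ℕ := ∑ e ∈ range (t + 1), m.choose e * x ^ e

namespace hammingBallVol

theorem one_le (x t m : ℕ) : 1 ≤ hammingBallVol x t m :=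
  single_le_sum (f := fun e => m.choose e * x ^ e) (fun _ _ => Nat.zero_le _)
    (mem_range.2 t.succ_pos) |>.trans_eq' (by simp)

theorem le_pow (x t m : ℕ) : hammingBallVol x t m ≤ (x + 1) ^ m := by
  have hzero : ∀ e ∈ range (t + 1 + m), e ∉ range (m + 1) → m.choose e * x ^ e = 0 :=
    fun e _ he => by rw [Nat.choose_eq_zero_of_lt (by simpa using he), zero_mul]
  calc hammingBallVol x t m ≤ ∑ e ∈ range (t + 1 + m), m.choose e * x ^ e :=
        sum_le_sum_of_subset (range_subset_range.2 (by omega))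
    _ = ∑ e ∈ range (m + 1), m.choose e * x ^ e :=
        (sum_subset (range_subset_range.2 (by omega)) hzero).symm
    _ = (x + 1) ^ m := by rw [add_pow]; simp [mul_comm]

theorem le_pred_pow {q : ℕ} (hq : 0 < q) (t m : ℕ) : hammingBallVol (q - 1) t m ≤ q ^ m :=
  (le_pow _ t m).trans_eq (by rw [Nat.sub_add_cancel hq])

theorem succ_add (x t m : ℕ) :
    hammingBallVol x t (m + 1) + m.choose t * x ^ (t + 1) = (x + 1) * hammingBallVol x t m := by
  unfold hammingBallVol
  induction t with
  | zero => simp; ring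
  | succ t ih =>
    rw [sum_range_succ (n := t + 1), sum_range_succ (n := t + 1), Nat.choose_succ_succ,
      mul_add (x + 1), ← ih]
    ring

theorem _root_.Nat.choose_mul_choose_succ_le {m e t : ℕ} (he : e ≤ t) :
    m.choose t * (m + 1).choose e ≤ (m + 1).choose t * m.choose e := by
  refine Nat.le_of_mul_le_mul_right ?_ m.succ_pos
  calc m.choose t * (m + 1).choose e * (m + 1)
      = (m + 1).choose t * (m + 1 - t) * (m + 1).choose e := by rw [← Nat.choose_mul_succ_eq]; ring
    _ ≤ (m + 1).choose t * (m + 1 - e) * (m + 1).choose e := by gcongr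
    _ = (m + 1).choose t * ((m + 1).choose e * (m + 1 - e)) := by ring
    _ = (m + 1).choose t * m.choose e * (m + 1) := by rw [← Nat.choose_mul_succ_eq]; ring

theorem mul_le_sq (x t m : ℕ) :
    hammingBallVol x t (m + 2) * hammingBallVol x t m ≤ hammingBallVol x t (m + 1) ^ 2 := by
  have hcross : m.choose t * x ^ (t + 1) * hammingBallVol x t (m + 1)
      ≤ (m + 1).choose t * x ^ (t + 1) * hammingBallVol x t m := by
    simp only [hammingBallVol, mul_sum]
    refine sum_le_sum fun e he => ?_
    have := Nat.choose_mul_choose_succ_le (m := m) (Nat.lt_succ_iff.1 (mem_range.1 he))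
    calc m.choose t * x ^ (t + 1) * ((m + 1).choose e * x ^ e)
        = m.choose t * (m + 1).choose e * (x ^ (t + 1) * x ^ e) := by ring
      _ ≤ (m + 1).choose t * m.choose e * (x ^ (t + 1) * x ^ e) := by gcongr
      _ = (m + 1).choose t * x ^ (t + 1) * (m.choose e * x ^ e) := by ring
  have h₀ := succ_add x t m
  have h₁ := succ_add x t (m + 1)
  nlinarith

end hammingBallVol

section LogConcave

variable {f : ℕ → ℕ}

theorem pow_le_pow_succ_of_log_concave (hpos : ∀ m, 0 < f m)
    (hf : ∀ m, f (m + 2) * f m ≤ f (m + 1) ^ 2) (m : ℕ) : f (m + 1) ^ m ≤ f m ^ (m + 1) := by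
  induction m with
  | zero => simpa [Nat.one_le_iff_ne_zero] using (hpos 0).ne'
  | succ m ih =>
    refine Nat.le_of_mul_le_mul_right ?_ (pow_pos (hpos (m + 1)) m)
    calc f (m + 2) ^ (m + 1) * f (m + 1) ^ m ≤ f (m + 2) ^ (m + 1) * f m ^ (m + 1) := by gcongr
      _ = (f (m + 2) * f m) ^ (m + 1) := (mul_pow _ _ _).symm
      _ ≤ (f (m + 1) ^ 2) ^ (m + 1) := by gcongr; exact hf m
      _ = f (m + 1) ^ (m + 1 + 1) * f (m + 1) ^ m := by ring

theorem pow_le_pow_of_log_concave (hpos : ∀ m, 0 < f m)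
    (hf : ∀ m, f (m + 2) * f m ≤ f (m + 1) ^ 2) {a m : ℕ} (ham : a ≤ m) :
    f m ^ a ≤ f a ^ m := by
  induction m with
  | zero => rw [Nat.le_zero.1 ham]
  | succ m ih =>
    rcases ham.eq_or_lt with rfl | hlt
    · rfl
    rcases Nat.eq_zero_or_pos m with rfl | hm
    · rw [Nat.lt_one_iff.1 hlt]; simpa [Nat.one_le_iff_ne_zero] using (hpos 0).ne'
    refine (Nat.pow_le_pow_iff_left hm.ne').1 ?_
    calc (f (m + 1) ^ a) ^ m = (f (m + 1) ^ m) ^ a := by ring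
      _ ≤ (f m ^ (m + 1)) ^ a :=
        Nat.pow_le_pow_left (pow_le_pow_succ_of_log_concave hpos hf m) a
      _ = (f m ^ a) ^ (m + 1) := by ring
      _ ≤ (f a ^ m) ^ (m + 1) := Nat.pow_le_pow_left (ih (Nat.lt_succ_iff.1 hlt)) _
      _ = (f a ^ (m + 1)) ^ m := by ring

end LogConcave

section HammingBall

variable {α Q : Type*} [Fintype α] [DecidableEq α] [Fintype Q] [DecidableEq Q]

theorem card_filter_differ_eq_pow (p : α → Q) (E : Finset α) :
    #{w : α → Q | ({j | w j ≠ p j} : Finset α) = E} = (Fintype.card Q - 1) ^ #E := by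
  have : ({w : α → Q | ({j | w j ≠ p j} : Finset α) = E} : Finset _) =
      Fintype.piFinset fun j => if j ∈ E then univ.erase (p j) else {p j} := by
    ext w
    simp only [mem_filter, mem_univ, true_and, Fintype.mem_piFinset, Finset.ext_iff]
    refine forall_congr' fun j => ?_
    split_ifs with hj <;> simp [hj]
  rw [this, Fintype.card_piFinset]
  simp only [apply_ite card, card_erase_of_mem (mem_univ _), card_univ, card_singleton]
  rw [Fintype.prod_ite_mem, prod_const]

theorem card_hammingSphere (p : α → Q) (e : ℕ) :
    #{w : α → Q | hammingDist w p = e} = (Fintype.card α).choose e * (Fintype.card Q - 1) ^ e := by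
  calc #{w : α → Q | hammingDist w p = e}
      = ∑ E ∈ powersetCard e univ, #{w : α → Q | ({j | w j ≠ p j} : Finset α) = E} := by
        rw [card_eq_sum_card_fiberwise (s := {w : α → Q | hammingDist w p = e})
          (f := fun w : α → Q => ({j | w j ≠ p j} : Finset α)) (t := powersetCard e univ)
          fun w hw => mem_powersetCard.2 ⟨subset_univ _, (mem_filter.1 hw).2⟩]
        refine sum_congr rfl fun E hE => congrArg card ?_
        rw [filter_filter]
        refine filter_congr fun w _ => and_iff_right_of_imp fun hw => ?_
        rw [hammingDist, hw, (mem_powersetCard.1 hE).2]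
    _ = _ := by
        rw [sum_congr rfl fun E hE => by rw [card_filter_differ_eq_pow, (mem_powersetCard.1 hE).2],
          sum_const, card_powersetCard, card_univ, smul_eq_mul]

theorem card_hammingBall (p : α → Q) (t : ℕ) :
    #{w : α → Q | hammingDist w p ≤ t} =
      hammingBallVol (Fintype.card Q - 1) t (Fintype.card α) := by
  rw [card_eq_sum_card_fiberwise (f := fun w => hammingDist w p) (t := range (t + 1))
    fun w hw => by simpa [Nat.lt_succ_iff] using hw]
  refine sum_congr rfl fun e he => ?_
  rw [filter_filter, ← card_hammingSphere p e]
  refine congrArg card (filter_congr fun w _ => and_iff_right_of_imp fun hw => ?_)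
  rw [hw]; exact Nat.lt_succ_iff.1 (mem_range.1 he)

theorem card_mul_hammingBallVol_le (P : Finset (α → Q)) {t : ℕ}
    (hP : ∀ p ∈ P, ∀ p' ∈ P, p ≠ p' → 2 * t + 1 ≤ hammingDist p p') :
    #P * hammingBallVol (Fintype.card Q - 1) t (Fintype.card α) ≤
      Fintype.card Q ^ Fintype.card α := by
  set ball := fun p : α → Q => ({w | hammingDist w p ≤ t} : Finset (α → Q))
  have hdisj : (P : Set (α → Q)).PairwiseDisjoint ball := by
    intro p hp p' hp' hne
    refine disjoint_left.2 fun w hw hw' => ?_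
    simp only [ball, mem_filter, mem_univ, true_and] at hw hw'
    have := hammingDist_triangle_left p p' w
    have := hP p hp p' hp' hne
    omega
  calc #P * hammingBallVol (Fintype.card Q - 1) t (Fintype.card α)
      = ∑ p ∈ P, #(ball p) := by simp [ball, card_hammingBall, mul_comm]
    _ = #(P.biUnion ball) := (card_biUnion hdisj).symm
    _ ≤ Fintype.card (α → Q) := card_le_univ _
    _ = _ := Fintype.card_fun

end HammingBall

section HammingDist

variable {ι Q : Type*} [DecidableEq Q]

theorem hammingDist_le_card_of_eqOn_compl [Fintype ι] {S : Finset ι} {c c' : ι → Q}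
    (h : ∀ j ∉ S, c j = c' j) : hammingDist c c' ≤ #S :=
  card_le_card fun j hj => by_contra fun hjS => (mem_filter.1 hj).2 (h j hjS)

theorem hammingDist_restrict (A : Finset ι) (c c' : ι → Q) :
    hammingDist (A.restrict c) (A.restrict c') = #{j ∈ A | c j ≠ c' j} := by
  rw [hammingDist, ← card_map (Function.Embedding.subtype _)]
  congr 1
  ext j
  simp only [Finset.restrict, univ_eq_attach, mem_map, Function.Embedding.coe_subtype,
    Subtype.exists, exists_and_right, exists_eq_right]
  exact ⟨fun ⟨hj, h⟩ => mem_filter.2 ⟨hj, (mem_filter.1 h).2⟩,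
    fun h => ⟨(mem_filter.1 h).1, mem_filter.2 ⟨mem_attach _ _, (mem_filter.1 h).2⟩⟩⟩

theorem card_le_one_of_eqOn_compl [Fintype ι] {D : Finset (ι → Q)} {d : ℕ} {S : Finset ι}
    (hdist : ∀ c ∈ D, ∀ c' ∈ D, c ≠ c' → d ≤ hammingDist c c')
    (hD : ∀ c ∈ D, ∀ c' ∈ D, ∀ j ∉ S, c j = c' j) (hS : #S ≤ d - 1) : #D ≤ 1 :=
  card_le_one.2 fun c hc c' hc' => by_contra fun hne => by
    have := hammingDist_pos.2 hne
    have := hdist c hc c' hc' hne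
    have := hammingDist_le_card_of_eqOn_compl (hD c hc c' hc')
    omega

theorem le_hammingDist_restrict_inter [DecidableEq ι] {R S : Finset ι} {ρ : ℕ} {c c' : ι → Q}
    (hloc : (∃ j ∈ R, c j ≠ c' j) → ρ ≤ #{j ∈ R | c j ≠ c' j})
    (hS : ∀ j ∉ S, c j = c' j) (hne : (R ∩ S).restrict c ≠ (R ∩ S).restrict c') :
    ρ ≤ hammingDist ((R ∩ S).restrict c) ((R ∩ S).restrict c') := by
  obtain ⟨⟨j, hj⟩, hjne⟩ := Function.ne_iff.1 hne
  rw [hammingDist_restrict]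
  refine (hloc ⟨j, (mem_inter.1 hj).1, hjne⟩).trans (card_le_card fun j hj => ?_)
  obtain ⟨hjR, hjne⟩ := mem_filter.1 hj
  exact mem_filter.2 ⟨mem_inter.2 ⟨hjR, by_contra fun hjS => hjne (hS j hjS)⟩, hjne⟩

end HammingDist

theorem pow_mul_pow_le_of_le_mul {D I F V B N a s : ℕ} (hD : D ≤ F * I)
    (hI : I ^ N * V ^ a ≤ B ^ a) (hF : F ^ N * V ^ s ≤ B ^ s) :
    D ^ N * V ^ (a + s) ≤ B ^ (a + s) :=
  calc D ^ N * V ^ (a + s) ≤ (F * I) ^ N * V ^ (a + s) := by gcongr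
    _ = (I ^ N * V ^ a) * (F ^ N * V ^ s) := by ring
    _ ≤ B ^ a * B ^ s := Nat.mul_le_mul hI hF
    _ = B ^ (a + s) := (pow_add _ _ _).symm

theorem pow_mul_pow_le_of_le_one {D V B N : ℕ} (hD : D ≤ 1) (hV : V ≤ B) (s : ℕ) :
    D ^ N * V ^ s ≤ B ^ s :=
  calc D ^ N * V ^ s ≤ 1 ^ N * V ^ s := by gcongr
    _ ≤ B ^ s := by rw [one_pow, one_mul]; exact Nat.pow_le_pow_left hV s

theorem eqOn_compl_sdiff_of_restrict_eq {ι Q : Type*} [DecidableEq ι] {A S : Finset ι}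
    {c c' : ι → Q} (hS : ∀ j ∉ S, c j = c' j) (hA : A.restrict c = A.restrict c') :
    ∀ j ∉ S \ A, c j = c' j := fun j hj => by
  by_cases hjA : j ∈ A
  · exact congrFun hA ⟨j, hjA⟩
  · exact hS j fun hjS => hj (mem_sdiff.2 ⟨hjS, hjA⟩)

section LocallyRepairable

variable {ι Q : Type*} [DecidableEq ι] [Fintype Q] [DecidableEq Q]
  {C : Finset (ι → Q)} {d ρ N t : ℕ}

theorem card_image_restrict_pow_mul_le {R : Finset ι}
    (hloc : ∀ c ∈ C, ∀ c' ∈ C, (∃ j ∈ R, c j ≠ c' j) → ρ ≤ #{j ∈ R | c j ≠ c' j})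
    (hcard : #R ≤ N) (ht : 2 * t + 1 ≤ ρ) (S : Finset ι) {D : Finset (ι → Q)} (hDC : D ⊆ C)
    (hD : ∀ c ∈ D, ∀ c' ∈ D, ∀ j ∉ S, c j = c' j) :
    #(D.image (R ∩ S).restrict) ^ N * hammingBallVol (Fintype.card Q - 1) t N ^ #(R ∩ S) ≤
      (Fintype.card Q ^ N) ^ #(R ∩ S) := by
  set A := R ∩ S
  have hpack := card_mul_hammingBallVol_le (D.image A.restrict) (t := t) <| by
    simp only [mem_image]
    rintro _ ⟨c, hc, rfl⟩ _ ⟨c', hc', rfl⟩ hne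
    exact ht.trans <| le_hammingDist_restrict_inter (hloc c (hDC hc) c' (hDC hc'))
      (hD c hc c' hc') hne
  rw [Fintype.card_coe] at hpack
  calc #(D.image A.restrict) ^ N * hammingBallVol (Fintype.card Q - 1) t N ^ #A
      ≤ #(D.image A.restrict) ^ N * hammingBallVol (Fintype.card Q - 1) t #A ^ N :=
        Nat.mul_le_mul_left _ <| pow_le_pow_of_log_concave (hammingBallVol.one_le _ _)
          (hammingBallVol.mul_le_sq _ _) ((card_le_card inter_subset_left).trans hcard)
    _ = (#(D.image A.restrict) * hammingBallVol (Fintype.card Q - 1) t #A) ^ N := (mul_pow ..).symm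
    _ ≤ (Fintype.card Q ^ #A) ^ N := Nat.pow_le_pow_left hpack N
    _ = (Fintype.card Q ^ N) ^ #A := by ring

theorem card_pow_mul_hammingBallVol_pow_le [Fintype ι] [Nonempty Q] {R : ι → Finset ι}
    (hdist : ∀ c ∈ C, ∀ c' ∈ C, c ≠ c' → d ≤ hammingDist c c')
    (hmem : ∀ i, i ∈ R i) (hcard : ∀ i, #(R i) ≤ N)
    (hloc : ∀ i, ∀ c ∈ C, ∀ c' ∈ C, (∃ j ∈ R i, c j ≠ c' j) → ρ ≤ #{j ∈ R i | c j ≠ c' j})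
    (ht : 2 * t + 1 ≤ ρ) (S : Finset ι) {D : Finset (ι → Q)} (hDC : D ⊆ C)
    (hD : ∀ c ∈ D, ∀ c' ∈ D, ∀ j ∉ S, c j = c' j) :
    #D ^ N * hammingBallVol (Fintype.card Q - 1) t N ^ (#S - (d - 1) + N) ≤
      (Fintype.card Q ^ N) ^ (#S - (d - 1) + N) := by
  set V := hammingBallVol (Fintype.card Q - 1) t N
  have hsmall : ∀ {D' : Finset (ι → Q)} (s : ℕ), #D' ≤ 1 →
      #D' ^ N * V ^ s ≤ (Fintype.card Q ^ N) ^ s :=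
    fun s h => pow_mul_pow_le_of_le_one h (hammingBallVol.le_pred_pow Fintype.card_pos t N) s
  have hdistSub : ∀ {D'}, D' ⊆ C → ∀ c ∈ D', ∀ c' ∈ D', c ≠ c' → d ≤ hammingDist c c' :=
    fun h c hc c' hc' => hdist c (h hc) c' (h hc')
  induction S using Finset.strongInduction generalizing D with
  | H S ih =>
  by_cases hS : #S ≤ d - 1
  · exact hsmall _ (card_le_one_of_eqOn_compl (hdistSub hDC) hD hS)
  rcases D.eq_empty_or_nonempty with rfl | hDne
  · exact hsmall _ (by simp)
  obtain ⟨i, hi⟩ : S.Nonempty := card_pos.1 (by omega)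
  have hI := card_image_restrict_pow_mul_le (hloc i) (hcard i) ht S hDC hD
  set A := R i ∩ S
  have hiA : i ∈ A := mem_inter.2 ⟨hmem i, hi⟩
  have hAN : #A ≤ N := (card_le_card inter_subset_left).trans (hcard i)
  have hF : ∀ g ∈ D.image A.restrict, #{c ∈ D | A.restrict c = g} ^ N * V ^ (#S - (d - 1) + N - #A)
      ≤ (Fintype.card Q ^ N) ^ (#S - (d - 1) + N - #A) := by
    intro g _
    have hfib : ∀ c ∈ {c ∈ D | A.restrict c = g}, ∀ c' ∈ {c ∈ D | A.restrict c = g},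
        ∀ j ∉ S \ A, c j = c' j := fun c hc c' hc' =>
      eqOn_compl_sdiff_of_restrict_eq (hD c (mem_filter.1 hc).1 c' (mem_filter.1 hc').1)
        ((mem_filter.1 hc).2.trans (mem_filter.1 hc').2.symm)
    have hDC' : {c ∈ D | A.restrict c = g} ⊆ C := (filter_subset _ D).trans hDC
    -- If `#(S \ A) ≤ d - 1`, induction only gives the exponent `N`, which is too large here.
    by_cases hSA : #(S \ A) ≤ d - 1
    · exact hsmall _ (card_le_one_of_eqOn_compl (hdistSub hDC') hfib hSA)
    · have := ih (S \ A) (sdiff_ssubset inter_subset_right ⟨i, hiA⟩) hDC' hfib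
      have hSA' : #(S \ A) = #S - #A := card_sdiff_of_subset inter_subset_right
      rwa [show #(S \ A) - (d - 1) + N = #S - (d - 1) + N - #A by omega] at this
  obtain ⟨g, hg, hmax⟩ := exists_max_image (D.image A.restrict)
    (fun g => #{c ∈ D | A.restrict c = g}) (hDne.image _)
  have := pow_mul_pow_le_of_le_mul (card_le_mul_card_image D _ hmax) hI (hF g hg)
  rwa [Nat.add_sub_cancel' (by omega)] at this

end LocallyRepairable

theorem le_div_mul_sub_logb {q k N M V : ℕ} (hq : 1 < q) (hV : 0 < V) (hN : 0 < N)
    (h : (q ^ k) ^ N * V ^ M ≤ (q ^ N) ^ M) : (k : ℝ) ≤ M / N * (N - Real.logb q V) := by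
  have hq' : (1 : ℝ) < q := by exact_mod_cast hq
  have hlog := Real.logb_le_logb_of_le hq' (by positivity) (by exact_mod_cast h :
    ((q : ℝ) ^ k) ^ N * (V : ℝ) ^ M ≤ ((q : ℝ) ^ N) ^ M)
  rw [Real.logb_mul (by positivity) (by positivity)] at hlog
  simp only [Real.logb_pow, Real.logb_self_eq_one hq', mul_one] at hlog
  rw [div_mul_eq_mul_div, le_div_iff₀ (by exact_mod_cast hN)]
  linarith

theorem LRC_hamming_bound_general {Q : Type*} [Fintype Q] [DecidableEq Q]
    (q n k d r ρ N : ℕ) (hq : Fintype.card Q = q) (hq2 : 2 ≤ q)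
    (hρ : 2 ≤ ρ) (hN : N = r + ρ - 1)
    (C : Finset (Fin n → Q)) (hk : C.card = q ^ k)
    (hdist : ∀ c ∈ C, ∀ c' ∈ C, c ≠ c' →
      d ≤ (univ.filter fun i => c i ≠ c' i).card)
    (R : Fin n → Finset (Fin n))
    (hmem : ∀ i, i ∈ R i) (hcard : ∀ i, (R i).card ≤ N)
    (hloc : ∀ i, ∀ c ∈ C, ∀ c' ∈ C, (∃ j ∈ R i, c j ≠ c' j) →
      ρ ≤ ((R i).filter fun j => c j ≠ c' j).card)
    (μ : ℕ) (hμ : μ = ⌈((n - (d - 1) : ℕ) : ℝ) / N⌉₊ + 1) :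
    (k : ℝ) ≤ μ * ((N : ℝ) -
      Real.logb q (∑ e ∈ range ((ρ - 1) / 2 + 1),
        (N.choose e : ℝ) * ((q : ℝ) - 1) ^ e)) := by
  subst hq hμ
  have : Nonempty Q := Fintype.card_pos_iff.1 (by omega)
  have hN0 : 0 < N := by omega
  set t := (ρ - 1) / 2
  set V := hammingBallVol (Fintype.card Q - 1) t N
  have hcount := card_pow_mul_hammingBallVol_pow_le hdist hmem hcard hloc (t := t) (by omega)
    univ (subset_refl C) (by simp)
  rw [hk, card_univ, Fintype.card_fin] at hcount
  have hV : (V : ℝ) = ∑ e ∈ range (t + 1), (N.choose e : ℝ) * ((Fintype.card Q : ℝ) - 1) ^ e := by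
    simp [V, hammingBallVol, Nat.cast_sub Fintype.card_pos]
  have hVq : Real.logb (Fintype.card Q) V ≤ N := by
    rw [Real.logb_le_iff_le_rpow (by exact_mod_cast hq2)
      (by exact_mod_cast hammingBallVol.one_le _ _ _), Real.rpow_natCast]
    exact_mod_cast hammingBallVol.le_pred_pow Fintype.card_pos t N
  rw [← hV]
  calc (k : ℝ) ≤ ((n - (d - 1) + N : ℕ) : ℝ) / N * (N - Real.logb (Fintype.card Q) V) :=
        le_div_mul_sub_logb (by omega) (hammingBallVol.one_le _ _ _) hN0 hcount
    _ ≤ _ := by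
        gcongr
        push_cast
        rw [add_div, div_self (by positivity)]
        gcongr
        exact Nat.le_ceil _

theorem LRC_hamming_bound {Q : Type*} [Fintype Q] [DecidableEq Q]
    (q n k d r ρ N : ℕ) (hq : Fintype.card Q = q) (hq2 : 2 ≤ q)
    (hρ : 2 ≤ ρ) (hN : N = r + ρ - 1) (hd1 : 1 ≤ d)
    (C : Finset (Fin n → Q)) (hk : C.card = q ^ k)
    (hdist : ∀ c ∈ C, ∀ c' ∈ C, c ≠ c' →
      d ≤ (univ.filter fun i => c i ≠ c' i).card)
    (R : Fin n → Finset (Fin n))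
    (hmem : ∀ i, i ∈ R i) (hcard : ∀ i, (R i).card ≤ N)
    (hloc : ∀ i, ∀ c ∈ C, ∀ c' ∈ C, (∃ j ∈ R i, c j ≠ c' j) →
      ρ ≤ ((R i).filter fun j => c j ≠ c' j).card)
    (μ : ℕ) (hμ : μ = ⌈((n - (d - 1) : ℕ) : ℝ) / N⌉₊ + 1) :
    (k : ℝ) ≤ μ * ((N : ℝ) -
      Real.logb q (∑ e ∈ range ((ρ - 1) / 2 + 1),
        (N.choose e : ℝ) * ((q : ℝ) - 1) ^ e)) :=
  LRC_hamming_bound_general q n k d r ρ N hq hq2 hρ hN C hk hdist R hmem hcard hloc μ hμ
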